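/- arXiv:2411.19831 — 2 statements merged into one kernel-verified Lean document; each statement's English description precedes it below -/
import Mathlib

section
/- Let n ≥ 1, let P(z) = Σ_{j=0}^{n} a_j z^j be a complex polynomial of degree n that has no zero in the open disk |z| < 1, and let k be an integer with 0 ≤ k ≤ n-1. Then for every complex number z with |z| = 1, |a_n z^n + (a_k/C(n,k)) z^k| ≤ |(a_{n-k}/C(n,k)) z^{n-k} + a_0|, where C(n,k) denotes the binomial coefficient n choose k. -/
open Polynomial

noncomputable def Complex.abs : AbsoluteValue ℂ ℝ := IsAbsoluteValue.toAbsoluteValue (norm : ℂ → ℝ)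

theorem Complex.norm_eq_abs (z : ℂ) : ‖z‖ = Complex.abs z := rfl

theorem Complex.abs_apply (z : ℂ) : Complex.abs z = Real.sqrt (Complex.normSq z) := Complex.norm_def z

theorem Complex.sq_abs (z : ℂ) : Complex.abs z ^ 2 = Complex.normSq z := Complex.sq_norm z

theorem Complex.normSq_eq_abs (z : ℂ) : Complex.normSq z = Complex.abs z ^ 2 := (Complex.sq_abs z).symm

@[simp]
theorem Complex.abs_conj (z : ℂ) : Complex.abs ((starRingEnd ℂ) z) = Complex.abs z := by
  rw [← Complex.norm_eq_abs, ← Complex.norm_eq_abs]; simp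

@[simp]
theorem Complex.abs_ofReal (r : ℝ) : Complex.abs (r : ℂ) = |r| := by
  rw [← Complex.norm_eq_abs]; simp

@[simp]
theorem Complex.abs_natCast (m : ℕ) : Complex.abs (m : ℂ) = m := by
  rw [← Complex.norm_eq_abs]; simp

theorem Complex.continuous_abs : Continuous Complex.abs := continuous_norm

private lemma stmt10_prod_map_le_aux (S : Multiset ℂ) (f g : ℂ → ℝ)
    (h : ∀ x ∈ S, 0 ≤ f x ∧ f x ≤ g x) :
    (S.map f).prod ≤ (S.map g).prod := by
  induction S using Multiset.induction with
  | empty => simp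
  | cons a s ih =>
    simp only [Multiset.map_cons, Multiset.prod_cons]
    have ha := h a (Multiset.mem_cons_self a s)
    have hs : ∀ x ∈ s, 0 ≤ f x ∧ f x ≤ g x := fun x hx => h x (Multiset.mem_cons_of_mem hx)
    have h1 : 0 ≤ (Multiset.map f s).prod := Multiset.prod_nonneg (by
      intro x hx; obtain ⟨y, hy, rfl⟩ := Multiset.mem_map.mp hx; exact (hs y hy).1)
    nlinarith [ih hs]

private lemma stmt10_one_le_prod_map (S : Multiset ℂ) (f : ℂ → ℝ) (h : ∀ x ∈ S, 1 ≤ f x) :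
    1 ≤ (S.map f).prod := by
  induction S using Multiset.induction with
  | empty => simp
  | cons a s ih =>
    simp only [Multiset.map_cons, Multiset.prod_cons]
    have ha := h a (Multiset.mem_cons_self a s)
    have ih' := ih (fun x hx => h x (Multiset.mem_cons_of_mem hx))
    nlinarith

private lemma stmt10_abs_multiset_sum (s : Multiset ℂ) :
    Complex.abs s.sum ≤ (s.map Complex.abs).sum := by
  induction s using Multiset.induction with
  | empty => simp
  | cons a t ih =>
    simp only [Multiset.sum_cons, Multiset.map_cons]
    exact le_trans (Complex.abs.add_le _ _) (by linarith)

private lemma stmt10_prod_map_le_one (S : Multiset ℂ) (h : ∀ x ∈ S, Complex.abs x ≤ 1) :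
    (S.map Complex.abs).prod ≤ 1 := by
  induction S using Multiset.induction with
  | empty => simp
  | cons a s ih =>
    simp only [Multiset.map_cons, Multiset.prod_cons]
    have ha := h a (Multiset.mem_cons_self a s)
    have ih' := ih (fun x hx => h x (Multiset.mem_cons_of_mem hx))
    have h1 : 0 ≤ (Multiset.map Complex.abs s).prod := Multiset.prod_nonneg (by
      intro x hx; obtain ⟨y, hy, rfl⟩ := Multiset.mem_map.mp hx; exact Complex.abs.nonneg y)
    nlinarith [Complex.abs.nonneg a]

private lemma stmt10_factor_ineq (w r : ℂ) (hw : 1 ≤ Complex.abs w) (hr : 1 ≤ Complex.abs r) :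
    Complex.abs (w - r) ≤ Complex.abs (1 - (starRingEnd ℂ) w * r) := by
  rw [Complex.abs_apply, Complex.abs_apply]
  apply Real.sqrt_le_sqrt
  rw [Complex.normSq_sub, Complex.normSq_sub]
  have e1 : ((1:ℂ) * (starRingEnd ℂ) ((starRingEnd ℂ) w * r)).re = (w * (starRingEnd ℂ) r).re := by
    simp [map_mul, mul_comm]
  have e2 : Complex.normSq ((starRingEnd ℂ) w * r) = Complex.normSq w * Complex.normSq r := by
    simp [Complex.normSq_mul, Complex.normSq_conj]
  have h1 : 1 ≤ Complex.normSq w := by have := Complex.sq_abs w; nlinarith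
  have h2 : 1 ≤ Complex.normSq r := by have := Complex.sq_abs r; nlinarith
  rw [e1, e2, Complex.normSq_one]
  nlinarith

private lemma stmt10_coeff_bound (n k : ℕ) (hk : k ≤ n) (W : Polynomial ℂ)
    (hWdeg : W.natDegree = n) (hW0 : W ≠ 0)
    (hWroots : ∀ t ∈ W.roots, Complex.abs t ≤ 1) :
    Complex.abs (W.coeff k) ≤ (n.choose k : ℝ) * Complex.abs (W.coeff n) := by
  have hcard : W.roots.card = n := by
    rw [← hWdeg]
    exact (Polynomial.splits_iff_card_roots.mp (IsAlgClosed.splits W))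
  have hfac := Polynomial.C_leadingCoeff_mul_prod_multiset_X_sub_C (p := W) (hWdeg ▸ hcard)
  rw [Polynomial.leadingCoeff, hWdeg] at hfac
  have hco : W.coeff k = W.coeff n * ((W.roots.map (fun t => X - Polynomial.C t)).prod.coeff k) := by
    conv_lhs => rw [← hfac]
    rw [Polynomial.coeff_C_mul]
  rw [hco, map_mul]
  rw [Multiset.prod_X_sub_C_coeff W.roots (hcard ▸ hk)]
  rw [map_mul, map_pow]
  simp only [map_neg, map_one, map_pow, AbsoluteValue.map_neg, AbsoluteValue.map_one, one_pow,
    one_mul]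
  rw [mul_comm]
  apply mul_le_mul_of_nonneg_right _ (Complex.abs.nonneg _)
  unfold Multiset.esymm
  calc Complex.abs ((Multiset.map Multiset.prod (W.roots.powersetCard (Multiset.card W.roots - k))).sum)
      ≤ ((Multiset.map Multiset.prod (W.roots.powersetCard (Multiset.card W.roots - k))).map
          Complex.abs).sum := stmt10_abs_multiset_sum _
    _ ≤ ((Multiset.map Multiset.prod (W.roots.powersetCard (Multiset.card W.roots - k))).map
          (fun _ => (1:ℝ))).sum := by
        apply Multiset.sum_map_le_sum_map
        intro u hu
        obtain ⟨v, hv, rfl⟩ := Multiset.mem_map.mp hu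
        have hvle := (Multiset.mem_powersetCard.mp hv).1
        rw [map_multiset_prod]
        apply stmt10_prod_map_le_one
        intro x hx
        exact hWroots x (Multiset.mem_of_le hvle hx)
    _ = (n.choose k : ℝ) := by
        rw [Multiset.map_const', Multiset.sum_replicate, Multiset.card_map,
          Multiset.card_powersetCard, hcard]
        simp [Nat.choose_symm hk]

private lemma stmt10_core_step (n k : ℕ) (hk' : k < n) (P Q : Polynomial ℂ)
    (hPdeg : P.natDegree = n) (hQdeg : Q.natDegree ≤ n)
    (hPQ : ∀ w : ℂ, 1 < Complex.abs w →
      Complex.abs (P.eval w) ≤ Complex.abs (Q.eval w) ∧ Q.eval w ≠ 0)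
    (habs : Complex.abs (P.coeff n) ≤ Complex.abs (Q.coeff n))
    (hQn0 : Q.coeff n ≠ 0) :
    ∀ w : ℂ, 1 < Complex.abs w →
      Complex.abs (P.coeff n * w ^ n + P.coeff k / (n.choose k : ℂ) * w ^ k)
        ≤ Complex.abs (Q.coeff n * w ^ n + Q.coeff k / (n.choose k : ℂ) * w ^ k) := by
  have hchoose : (n.choose k : ℂ) ≠ 0 := by
    have : 0 < n.choose k := Nat.choose_pos (le_of_lt hk')
    exact_mod_cast Nat.cast_ne_zero.mpr this.ne'
  have key : ∀ lam : ℂ, 1 < Complex.abs lam →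
      Complex.abs lam * Complex.abs (Q.coeff n) - Complex.abs (P.coeff n) > 0 ∧
      ∀ w : ℂ, 1 < Complex.abs w →
      (Complex.abs lam * Complex.abs (Q.coeff n) - Complex.abs (P.coeff n)) *
        ((Complex.abs w) ^ n - (Complex.abs w) ^ k)
        ≤ Complex.abs (lam * (Q.coeff n * w ^ n + Q.coeff k / (n.choose k : ℂ) * w ^ k)
            - (P.coeff n * w ^ n + P.coeff k / (n.choose k : ℂ) * w ^ k)) := by
    intro lam hlam
    set W : Polynomial ℂ := Polynomial.C lam * Q - P with hWdef
    have hWcoeff : ∀ j, W.coeff j = lam * Q.coeff j - P.coeff j := by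
      intro j
      rw [hWdef, Polynomial.coeff_sub, Polynomial.coeff_C_mul]
    have hQabs0 : 0 < Complex.abs (Q.coeff n) := by
      simpa using (Complex.abs.pos hQn0)
    have hpos : Complex.abs lam * Complex.abs (Q.coeff n) - Complex.abs (P.coeff n) > 0 := by
      nlinarith
    refine ⟨hpos, ?_⟩
    intro w hw
    have hWn : Complex.abs (W.coeff n)
        ≥ Complex.abs lam * Complex.abs (Q.coeff n) - Complex.abs (P.coeff n) := by
      rw [hWcoeff n]
      calc Complex.abs lam * Complex.abs (Q.coeff n) - Complex.abs (P.coeff n)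
          = Complex.abs (lam * Q.coeff n) - Complex.abs (P.coeff n) := by rw [map_mul]
        _ ≤ Complex.abs (lam * Q.coeff n - P.coeff n) := by
            simpa [Complex.norm_eq_abs] using norm_sub_norm_le (lam * Q.coeff n) (P.coeff n)
    have hWn0 : W.coeff n ≠ 0 := by
      intro h
      rw [h] at hWn
      simp only [map_zero] at hWn
      linarith
    have hWdeg : W.natDegree = n := by
      apply le_antisymm
      · apply le_trans (Polynomial.natDegree_sub_le _ _)
        simp only [max_le_iff]
        constructor
        · exact le_trans (Polynomial.natDegree_C_mul_le _ _) hQdeg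
        · exact le_of_eq hPdeg
      · exact Polynomial.le_natDegree_of_ne_zero hWn0
    have hW0 : W ≠ 0 := fun h => hWn0 (by simp [h])
    have hWroots : ∀ t ∈ W.roots, Complex.abs t ≤ 1 := by
      intro t ht
      by_contra hc
      push_neg at hc
      have hev : W.eval t = 0 := ((Polynomial.mem_roots hW0).mp ht)
      have h1 := hPQ t hc
      have h2 : Complex.abs (lam * Q.eval t) > Complex.abs (P.eval t) := by
        rw [map_mul]
        have := Complex.abs.pos h1.2
        nlinarith [h1.1]
      rw [hWdef] at hev
      simp only [Polynomial.eval_sub, Polynomial.eval_mul, Polynomial.eval_C] at hev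
      have h3 : lam * Q.eval t = P.eval t := sub_eq_zero.mp hev
      rw [h3] at h2
      linarith
    have hbound := stmt10_coeff_bound n k (le_of_lt hk') W hWdeg hW0 hWroots
    have hT : W.coeff n * w ^ n + W.coeff k / (n.choose k : ℂ) * w ^ k
        = lam * (Q.coeff n * w ^ n + Q.coeff k / (n.choose k : ℂ) * w ^ k)
          - (P.coeff n * w ^ n + P.coeff k / (n.choose k : ℂ) * w ^ k) := by
      rw [hWcoeff n, hWcoeff k]
      field_simp
      ring
    rw [← hT]
    have habsw : (0:ℝ) < Complex.abs w := by linarith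
    have h1 : Complex.abs (W.coeff k / (n.choose k : ℂ) * w ^ k)
        ≤ Complex.abs (W.coeff n) * (Complex.abs w) ^ k := by
      rw [map_mul, map_div₀, map_pow]
      have hcabs : Complex.abs ((n.choose k : ℂ)) = (n.choose k : ℝ) := by
        simp [Complex.abs_natCast]
      rw [hcabs]
      have hch : (1:ℝ) ≤ (n.choose k : ℝ) := by
        exact_mod_cast Nat.choose_pos (le_of_lt hk')
      have hwk : (0:ℝ) < Complex.abs w ^ k := pow_pos habsw k
      have : Complex.abs (W.coeff k) / (n.choose k : ℝ) ≤ Complex.abs (W.coeff n) := by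
        rw [div_le_iff₀ (by linarith)]
        nlinarith [hbound]
      nlinarith [Complex.abs.nonneg (W.coeff k)]
    have h2 : Complex.abs (W.coeff n * w ^ n) = Complex.abs (W.coeff n) * (Complex.abs w) ^ n := by
      rw [map_mul, map_pow]
    calc (Complex.abs lam * Complex.abs (Q.coeff n) - Complex.abs (P.coeff n)) *
          ((Complex.abs w) ^ n - (Complex.abs w) ^ k)
        ≤ Complex.abs (W.coeff n) * ((Complex.abs w) ^ n - (Complex.abs w) ^ k) := by
          apply mul_le_mul_of_nonneg_right hWn
          have : (Complex.abs w) ^ k ≤ (Complex.abs w) ^ n :=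
            pow_le_pow_right₀ (le_of_lt hw) (le_of_lt hk')
          linarith
      _ = Complex.abs (W.coeff n) * (Complex.abs w) ^ n
          - Complex.abs (W.coeff n) * (Complex.abs w) ^ k := by ring
      _ ≤ Complex.abs (W.coeff n * w ^ n)
          - Complex.abs (W.coeff k / (n.choose k : ℂ) * w ^ k) := by
          rw [h2]; linarith
      _ ≤ Complex.abs (W.coeff n * w ^ n + W.coeff k / (n.choose k : ℂ) * w ^ k) := by
          have := norm_sub_norm_le (W.coeff n * w ^ n) (-(W.coeff k / (n.choose k : ℂ) * w ^ k))
          simp only [Complex.norm_eq_abs, norm_neg, sub_neg_eq_add] at this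
          simpa [Complex.norm_eq_abs] using this
  intro w hw
  set L : ℂ := P.coeff n * w ^ n + P.coeff k / (n.choose k : ℂ) * w ^ k with hL
  set V : ℂ := Q.coeff n * w ^ n + Q.coeff k / (n.choose k : ℂ) * w ^ k with hV
  by_contra hcon
  push_neg at hcon
  have hd : 0 < (Complex.abs w) ^ n - (Complex.abs w) ^ k := by
    have : (Complex.abs w) ^ k < (Complex.abs w) ^ n := pow_lt_pow_right₀ hw hk'
    linarith
  set d : ℝ := (Complex.abs w) ^ n - (Complex.abs w) ^ k with hdd
  by_cases hV0 : V = 0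
  · have hQabs0 : 0 < Complex.abs (Q.coeff n) := Complex.abs.pos hQn0
    set M : ℝ := max 2 ((Complex.abs L / d + Complex.abs (P.coeff n) + 1)
      / Complex.abs (Q.coeff n)) with hM
    have hM2 : 2 ≤ M := le_max_left _ _
    have hMabs : Complex.abs (M : ℂ) = M := by
      rw [Complex.abs_ofReal, abs_of_pos (by linarith)]
    have hMlam : 1 < Complex.abs (M : ℂ) := by rw [hMabs]; linarith
    obtain ⟨hpos, hkey⟩ := key (M : ℂ) hMlam
    have h2 := hkey w hw
    rw [← hV, ← hL, hV0, mul_zero, zero_sub, Complex.abs.map_neg] at h2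
    rw [hMabs] at h2 hpos
    have hMge : (Complex.abs L / d + Complex.abs (P.coeff n) + 1) / Complex.abs (Q.coeff n) ≤ M :=
      le_max_right _ _
    have : Complex.abs L / d + Complex.abs (P.coeff n) + 1 ≤ M * Complex.abs (Q.coeff n) := by
      rw [div_le_iff₀ hQabs0] at hMge
      linarith
    have hLnn : 0 ≤ Complex.abs L := Complex.abs.nonneg L
    have h4 : (Complex.abs L / d) * d = Complex.abs L := div_mul_cancel₀ _ (ne_of_gt hd)
    have h5 := mul_le_mul_of_nonneg_right this (le_of_lt hd)
    nlinarith [h2, h4, h5]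
  · have hVabs : 0 < Complex.abs V := Complex.abs.pos hV0
    set lam : ℂ := L / V with hlamdef
    have hlamabs : 1 < Complex.abs lam := by
      rw [hlamdef, map_div₀]
      rw [lt_div_iff₀ hVabs]
      linarith
    obtain ⟨hpos, hkey⟩ := key lam hlamabs
    have h2 := hkey w hw
    rw [← hV, ← hL] at h2
    have : lam * V - L = 0 := by
      rw [hlamdef]
      field_simp
      ring
    rw [this, map_zero] at h2
    nlinarith

private lemma stmt10_limit (n k : ℕ) (a b c e : ℂ) (z : ℂ) (hz : Complex.abs z = 1)
    (h : ∀ w : ℂ, 1 < Complex.abs w →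
      Complex.abs (a * w ^ n + b * w ^ k) ≤ Complex.abs (c * w ^ n + e * w ^ k)) :
    Complex.abs (a * z ^ n + b * z ^ k) ≤ Complex.abs (c * z ^ n + e * z ^ k) := by
  set f : ℝ → ℝ := fun t => Complex.abs (c * ((t:ℂ)*z) ^ n + e * ((t:ℂ)*z) ^ k)
    - Complex.abs (a * ((t:ℂ)*z) ^ n + b * ((t:ℂ)*z) ^ k) with hf
  have hcont : Continuous f := by
    apply Continuous.sub
    all_goals
      apply Continuous.comp Complex.continuous_abs
      fun_prop
  have hge : ∀ t ∈ Set.Ioi (1:ℝ), 0 ≤ f t := by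
    intro t ht
    have h1 : 1 < Complex.abs ((t:ℂ)*z) := by
      rw [map_mul, hz, mul_one, Complex.abs_ofReal]
      rw [abs_of_pos (by linarith [Set.mem_Ioi.mp ht])]
      exact Set.mem_Ioi.mp ht
    have := h ((t:ℂ)*z) h1
    simp only [hf]
    linarith
  have htend : Filter.Tendsto f (nhdsWithin 1 (Set.Ioi 1)) (nhds (f 1)) :=
    (hcont.tendsto 1).mono_left nhdsWithin_le_nhds
  have h0 : 0 ≤ f 1 :=
    ge_of_tendsto htend (Filter.eventually_of_mem self_mem_nhdsWithin hge)
  simp only [hf, Complex.ofReal_one, one_mul] at h0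
  linarith

private lemma stmt10_conj_flip (n k : ℕ) (hk : k ≤ n) (a0 ank : ℂ) (C : ℕ) (z : ℂ)
    (hz : Complex.abs z = 1) :
    Complex.abs ((starRingEnd ℂ) a0 * z ^ n + (starRingEnd ℂ) ank / (C : ℂ) * z ^ k)
      = Complex.abs (ank / (C : ℂ) * z ^ (n - k) + a0) := by
  have hzz : (starRingEnd ℂ) z * z = 1 := by
    rw [mul_comm, Complex.mul_conj]
    norm_cast
    rw [Complex.normSq_eq_abs, hz]
    norm_num
  have hsplit : z ^ n = z ^ (n - k) * z ^ k := by
    rw [← pow_add]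
    congr 1
    omega
  have h2 : ((starRingEnd ℂ) z) ^ (n - k) * z ^ n = z ^ k := by
    rw [hsplit, ← mul_assoc, ← mul_pow, hzz, one_pow, one_mul]
  have E : (starRingEnd ℂ) a0 * z ^ n + (starRingEnd ℂ) ank / (C : ℂ) * z ^ k
      = (starRingEnd ℂ) (ank / (C : ℂ) * z ^ (n - k) + a0) * z ^ n := by
    rw [map_add, map_mul, map_div₀, map_pow, map_natCast, add_mul]
    rw [mul_assoc ((starRingEnd ℂ) ank / (C : ℂ)) _ _, h2]
    ring
  rw [E, map_mul, map_pow, hz, Complex.abs_conj, one_pow, mul_one]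

private lemma stmt10_main (n : ℕ) (hn : 1 ≤ n) (P : Polynomial ℂ) (hdeg : P.natDegree = n)
    (hzero : ∀ z : ℂ, Complex.abs z < 1 → P.eval z ≠ 0)
    (k : ℕ) (hk : k ≤ n - 1) (z : ℂ) (hz : Complex.abs z = 1) :
    Complex.abs (P.coeff n * z ^ n + P.coeff k / (n.choose k : ℂ) * z ^ k)
      ≤ Complex.abs (P.coeff (n - k) / (n.choose k : ℂ) * z ^ (n - k) + P.coeff 0) := by
  have hk' : k < n := by omega
  have ha0 : P.coeff 0 ≠ 0 := by
    rw [Polynomial.coeff_zero_eq_eval_zero]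
    exact hzero 0 (by simp)
  have hP0 : P ≠ 0 := fun h => ha0 (by simp [h])
  have hcard : P.roots.card = n := by
    rw [← hdeg]
    exact (Polynomial.splits_iff_card_roots.mp (IsAlgClosed.splits P))
  have hroots : ∀ r ∈ P.roots, 1 ≤ Complex.abs r := by
    intro r hr
    by_contra h
    exact hzero r (by linarith [not_le.mp h]) ((Polynomial.mem_roots hP0).mp hr)
  have han : P.coeff n ≠ 0 := by
    rw [← hdeg]
    exact Polynomial.leadingCoeff_ne_zero.mpr hP0
  have hfac : P = Polynomial.C (P.coeff n) * (P.roots.map (fun r => X - Polynomial.C r)).prod := by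
    have h2 := Polynomial.C_leadingCoeff_mul_prod_multiset_X_sub_C (p := P) (hdeg ▸ hcard)
    rw [Polynomial.leadingCoeff, hdeg] at h2
    exact h2.symm
  have heval : ∀ w : ℂ, Complex.abs (P.eval w)
      = Complex.abs (P.coeff n) * (P.roots.map (fun r => Complex.abs (w - r))).prod := by
    intro w
    conv_lhs => rw [hfac]
    rw [Polynomial.eval_mul, Polynomial.eval_C, map_mul, Polynomial.eval_multiset_prod,
      Multiset.map_map, map_multiset_prod, Multiset.map_map]
    congr 2
    ext r
    simp
  have ha0n : Complex.abs (P.coeff n) ≤ Complex.abs (P.coeff 0) := by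
    have h0 := heval 0
    rw [← Polynomial.coeff_zero_eq_eval_zero] at h0
    rw [h0]
    have : 1 ≤ ((P.roots.map (fun r => Complex.abs (0 - r))).prod) := by
      apply stmt10_one_le_prod_map
      intro x hx
      simpa using hroots x hx
    nlinarith [Complex.abs.nonneg (P.coeff n)]
  -- the reversed conjugate polynomial
  set Q : Polynomial ℂ := ∑ j ∈ Finset.range (n+1),
    Polynomial.C ((starRingEnd ℂ) (P.coeff (n - j))) * X ^ j with hQdef
  have hQcoeff : ∀ j, j ≤ n → Q.coeff j = (starRingEnd ℂ) (P.coeff (n - j)) := by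
    intro j hj
    rw [hQdef, Polynomial.finset_sum_coeff]
    rw [Finset.sum_eq_single j]
    · simp
    · intro b _ hbj
      simp [Polynomial.coeff_C_mul, Polynomial.coeff_X_pow, hbj.symm]
    · intro hj'
      exact absurd (Finset.mem_range.mpr (by omega)) hj'
  have hQdeg : Q.natDegree ≤ n := by
    apply Polynomial.natDegree_sum_le_of_forall_le
    intro j hj
    apply le_trans (Polynomial.natDegree_C_mul_le _ _)
    have := Finset.mem_range.mp hj
    simp only [Polynomial.natDegree_X_pow]
    omega
  have hQeval : ∀ w : ℂ, w ≠ 0 →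
      Q.eval w = w ^ n * (starRingEnd ℂ) (P.eval ((starRingEnd ℂ) w)⁻¹) := by
    intro w hw
    rw [hQdef]
    rw [Polynomial.eval_finset_sum]
    have hPe : P.eval ((starRingEnd ℂ) w)⁻¹
        = ∑ i ∈ Finset.range (n+1), P.coeff i * (((starRingEnd ℂ) w)⁻¹) ^ i :=
      Polynomial.eval_eq_sum_range' (by omega : P.natDegree < n + 1) _
    rw [hPe, map_sum, Finset.mul_sum]
    rw [← Finset.sum_range_reflect]
    apply Finset.sum_congr rfl
    intro j hj
    have hjn : j ≤ n := by
      have := Finset.mem_range.mp hj; omega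
    simp only [Polynomial.eval_mul, Polynomial.eval_C, Polynomial.eval_pow, Polynomial.eval_X]
    have h1 : n + 1 - 1 - j = n - j := by omega
    rw [h1, map_mul, map_pow]
    have h2 : (starRingEnd ℂ) (((starRingEnd ℂ) w)⁻¹) = w⁻¹ := by
      rw [map_inv₀, Complex.conj_conj]
    rw [h2]
    have hnn : n - (n - j) = j := by omega
    rw [hnn]
    have h3 : w ^ (n - j) = w ^ n * (w ^ j)⁻¹ := by
      rw [pow_sub₀ w hw hjn]
    rw [h3, inv_pow]
    ring
  -- comparison of evaluations outside the unit disk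
  have hPQ : ∀ w : ℂ, 1 < Complex.abs w →
      Complex.abs (P.eval w) ≤ Complex.abs (Q.eval w) ∧ Q.eval w ≠ 0 := by
    intro w hw
    have hw0 : w ≠ 0 := by
      intro h; rw [h] at hw; simp at hw; linarith
    have hcw0 : (starRingEnd ℂ) w ≠ 0 := by simpa using hw0
    have habscw : Complex.abs ((starRingEnd ℂ) w) = Complex.abs w := Complex.abs_conj w
    have hu : Complex.abs (((starRingEnd ℂ) w)⁻¹) < 1 := by
      rw [map_inv₀, habscw]
      rw [inv_lt_one_iff₀]; right; exact hw
    have hQne : Q.eval w ≠ 0 := by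
      rw [hQeval w hw0]
      apply mul_ne_zero (pow_ne_zero _ hw0)
      simpa using hzero _ hu
    refine ⟨?_, hQne⟩
    have habsQ : Complex.abs (Q.eval w)
        = Complex.abs w ^ n * Complex.abs (P.eval ((starRingEnd ℂ) w)⁻¹) := by
      rw [hQeval w hw0, map_mul, map_pow, Complex.abs_conj]
    rw [habsQ, heval w, heval (((starRingEnd ℂ) w)⁻¹)]
    rw [show (Complex.abs w) ^ n * (Complex.abs (P.coeff n) *
        (P.roots.map (fun r => Complex.abs (((starRingEnd ℂ) w)⁻¹ - r))).prod)
      = Complex.abs (P.coeff n) * ((Complex.abs w) ^ n *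
        (P.roots.map (fun r => Complex.abs (((starRingEnd ℂ) w)⁻¹ - r))).prod) by ring]
    apply mul_le_mul_of_nonneg_left _ (Complex.abs.nonneg _)
    have hpow : (Complex.abs w) ^ n = (P.roots.map (fun _ => Complex.abs w)).prod := by
      rw [Multiset.map_const', Multiset.prod_replicate, hcard]
    rw [hpow, ← Multiset.prod_map_mul]
    apply stmt10_prod_map_le_aux
    intro r hr
    constructor
    · exact Complex.abs.nonneg _
    · have hfact : Complex.abs w * Complex.abs (((starRingEnd ℂ) w)⁻¹ - r)
          = Complex.abs (1 - (starRingEnd ℂ) w * r) := by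
        rw [← map_mul]
        have e : w * (((starRingEnd ℂ) w)⁻¹ - r)
            = (w * ((starRingEnd ℂ) w)⁻¹) * (1 - (starRingEnd ℂ) w * r) := by
          field_simp
        rw [e, map_mul]
        have : Complex.abs (w * ((starRingEnd ℂ) w)⁻¹) = 1 := by
          rw [map_mul, map_inv₀, habscw]
          field_simp
        rw [this, one_mul]
      rw [hfact]
      exact stmt10_factor_ineq w r (le_of_lt hw) (hroots r hr)
  -- coefficient facts about Q
  have hQn : Q.coeff n = (starRingEnd ℂ) (P.coeff 0) := by
    rw [hQcoeff n le_rfl]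
    simp
  have hQk : Q.coeff k = (starRingEnd ℂ) (P.coeff (n - k)) := hQcoeff k (le_of_lt hk')
  have hQn0 : Q.coeff n ≠ 0 := by
    rw [hQn]
    simpa using ha0
  have habs : Complex.abs (P.coeff n) ≤ Complex.abs (Q.coeff n) := by
    rw [hQn, Complex.abs_conj]
    exact ha0n
  have hcore := stmt10_core_step n k hk' P Q hdeg hQdeg hPQ habs hQn0
  have hlim := stmt10_limit n k (P.coeff n) (P.coeff k / (n.choose k : ℂ))
    (Q.coeff n) (Q.coeff k / (n.choose k : ℂ)) z hz hcore
  calc Complex.abs (P.coeff n * z ^ n + P.coeff k / (n.choose k : ℂ) * z ^ k)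
      ≤ Complex.abs (Q.coeff n * z ^ n + Q.coeff k / (n.choose k : ℂ) * z ^ k) := hlim
    _ = Complex.abs (P.coeff (n - k) / (n.choose k : ℂ) * z ^ (n - k) + P.coeff 0) := by
        rw [hQn, hQk]
        exact stmt10_conj_flip n k (le_of_lt hk') (P.coeff 0) (P.coeff (n - k)) (n.choose k) z hz

theorem stmt_10 (n : ℕ) (hn : 1 ≤ n) (P : Polynomial ℂ) (hdeg : P.natDegree = n)
    (hzero : ∀ z : ℂ, ‖z‖ < 1 → P.eval z ≠ 0)
    (k : ℕ) (hk : k ≤ n - 1) (z : ℂ) (hz : ‖z‖ = 1) :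
    ‖P.coeff n * z ^ n + P.coeff k / (n.choose k : ℂ) * z ^ k‖
      ≤ ‖P.coeff (n - k) / (n.choose k : ℂ) * z ^ (n - k) + P.coeff 0‖ := by
  exact stmt10_main n hn P hdeg hzero k hk z hz
end

section
/- Let n ≥ 1, let P(z) = Σ_{j=0}^{n} a_j z^j be a complex polynomial of degree n that has no zero in the open disk |z| < 1, and let λ be a complex number with |λ| > 1. Define P*(z) := z^n · conj(P(1/conj(z))) = Σ_{j=0}^{n} conj(a_{n-j}) z^j. Then every zero of the polynomial P(z) + λ P*(z) lies in the closed unit disk |z| ≤ 1. -/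
open Polynomial

private lemma key_ineq (z r : ℂ) (hz : 1 ≤ ‖z‖) (hr : 1 ≤ ‖r‖) :
    ‖z - r‖ ≤ ‖1 - (starRingEnd ℂ) z * r‖ := by
  have hz' : 1 ≤ Complex.normSq z := by rw [← Complex.sq_norm]; nlinarith
  have hr' : 1 ≤ Complex.normSq r := by rw [← Complex.sq_norm]; nlinarith
  rw [Complex.norm_def, Complex.norm_def]
  apply Real.sqrt_le_sqrt
  simp only [Complex.normSq_apply, Complex.sub_re, Complex.sub_im, Complex.one_re,
    Complex.one_im, Complex.mul_re, Complex.mul_im, Complex.conj_re, Complex.conj_im] at *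
  nlinarith [mul_nonneg (sub_nonneg.2 hz') (sub_nonneg.2 hr')]

private lemma pstar_eval (n : ℕ) (P : Polynomial ℂ) (hdeg : P.natDegree = n)
    (z : ℂ) (hz : z ≠ 0) :
    (∑ j ∈ Finset.range (n + 1), C ((starRingEnd ℂ) (P.coeff (n - j))) * X ^ j).eval z
      = z ^ n * (starRingEnd ℂ) (P.eval ((starRingEnd ℂ) z)⁻¹) := by
  have hzc : (starRingEnd ℂ) z ≠ 0 := by simpa using hz
  conv_rhs => rw [Polynomial.eval_eq_sum_range, hdeg]
  simp only [eval_finset_sum, eval_mul, eval_C, eval_pow, eval_X, map_sum, map_mul, map_pow,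
    map_inv₀, Complex.conj_conj, Finset.mul_sum]
  rw [← Finset.sum_range_reflect]
  apply Finset.sum_congr rfl
  intro j hj
  rw [Finset.mem_range] at hj
  have hj' : j ≤ n := Nat.lt_succ_iff.mp hj
  simp only [Nat.add_sub_cancel]
  rw [Nat.sub_sub_self hj']
  rw [inv_pow, mul_comm (z^n), mul_assoc]
  congr 1
  rw [eq_comm, inv_mul_eq_iff_eq_mul₀ (pow_ne_zero _ hz), ← pow_add, Nat.add_sub_cancel' hj']

theorem stmt_11 (n : ℕ) (hn : 1 ≤ n) (P : Polynomial ℂ) (hdeg : P.natDegree = n)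
    (hzero : ∀ z : ℂ, ‖z‖ < 1 → P.eval z ≠ 0)
    (lam : ℂ) (hlam : 1 < ‖lam‖)
    (Pstar : Polynomial ℂ)
    (hPstar : Pstar = ∑ j ∈ Finset.range (n + 1), C ((starRingEnd ℂ) (P.coeff (n - j))) * X ^ j)
    (z : ℂ) (hz : (P + C lam * Pstar).eval z = 0) :
    ‖z‖ ≤ 1 := by
  by_contra hcon
  push_neg at hcon
  have hz0 : z ≠ 0 := by
    intro h; rw [h] at hcon; simp at hcon; linarith
  set w : ℂ := ((starRingEnd ℂ) z)⁻¹ with hw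
  have habsw : ‖w‖ < 1 := by
    rw [hw, norm_inv, Complex.norm_conj]
    rw [inv_lt_one_iff₀]; right; exact hcon
  have hPw : P.eval w ≠ 0 := hzero w habsw
  have hstar : Pstar.eval z = z ^ n * (starRingEnd ℂ) (P.eval w) := by
    rw [hPstar]; exact pstar_eval n P hdeg z hz0
  have hstar_ne : Pstar.eval z ≠ 0 := by
    rw [hstar]
    exact mul_ne_zero (pow_ne_zero _ hz0) (by simpa using hPw)
  have hsplits : P.Splits := IsAlgClosed.splits P
  have hfact := hsplits.eq_prod_roots
  have hcard : Multiset.card P.roots = n := by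
    rw [← hdeg]; exact Polynomial.splits_iff_card_roots.mp hsplits
  have hroot_abs : ∀ r ∈ P.roots, 1 ≤ ‖r‖ := by
    intro r hr
    by_contra h
    push_neg at h
    exact hzero r h ((Polynomial.isRoot_of_mem_roots hr))
  have hper : ∀ r ∈ P.roots, ‖z - r‖ ≤ ‖z‖ * ‖w - r‖ := by
    intro r hr
    have heq : ‖z‖ * ‖w - r‖
        = ‖1 - (starRingEnd ℂ) z * r‖ := by
      rw [← Complex.norm_conj z, ← norm_mul]
      congr 1
      rw [hw, mul_sub, mul_inv_cancel₀ (by simpa using hz0 : (starRingEnd ℂ) z ≠ 0)]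
    rw [heq]
    exact key_ineq z r hcon.le (hroot_abs r hr)
  have hevals : ‖P.eval z‖ ≤ ‖Pstar.eval z‖ := by
    rw [hstar, norm_mul, norm_pow, Complex.norm_conj]
    rw [hfact]
    simp only [eval_mul, eval_C, eval_multiset_prod, Multiset.map_map, Function.comp,
      eval_sub, eval_X, eval_C, norm_mul,
      (fun s : Multiset ℂ => show ‖s.prod‖ = (s.map norm).prod from map_multiset_prod (normHom (α := ℂ)) s)]
    rw [mul_comm (‖z‖ ^ n), mul_assoc]
    apply mul_le_mul_of_nonneg_left _ (norm_nonneg _)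
    have hzn : ‖z‖ ^ n = (P.roots.map fun _ => ‖z‖).prod := by
      rw [Multiset.map_const', Multiset.prod_replicate, hcard]
    rw [hzn, ← Multiset.prod_map_mul]
    apply Multiset.prod_map_le_prod_map₀
    · intro r _; exact norm_nonneg _
    · intro r hr; rw [mul_comm]; exact hper r hr
  have hsum : P.eval z + lam * Pstar.eval z = 0 := by simpa using hz
  have habs_eq : ‖P.eval z‖ = ‖lam‖ * ‖Pstar.eval z‖ := by
    have : P.eval z = -(lam * Pstar.eval z) := by linear_combination hsum
    rw [this, norm_neg, norm_mul]
  have hpos : 0 < ‖Pstar.eval z‖ := norm_pos_iff.mpr hstar_ne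
  nlinarith
end
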